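/- (Upper-bound half of Proposition 3.) Let f and f̂ be nonnegative Lebesgue-integrable functions on [−π, π], and for each n ≥ 1 let Rₙ(f) denote the n×n Hermitian Toeplitz matrix whose (j,k) entry is the Fourier coefficient c_{j−k}(f) := (1/2π)∫_{−π}^{π} f(θ) e^{−i(j−k)θ} dθ. Then for every n, δ_T(Rₙ(f), Rₙ(f̂)) ≤ (1/2π)∫_{−π}^{π} |f(θ) − f̂(θ)| dθ, where δ_T(M₁, M₂) := min{ q₀ + q̂₀ : Q, Q̂ positive semidefinite Hermitian Toeplitz n×n matrices with constant diagonal entries q₀, q̂₀, satisfying M₁ + Q = M₂ + Q̂ }. -/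

import Mathlib

open Matrix MeasureTheory Set
open scoped ComplexOrder

/-- A matrix is Toeplitz if its `(j,k)` entry depends only on `j - k`. -/
def IsToeplitz {n : ℕ} {α : Type*} (M : Matrix (Fin n) (Fin n) α) : Prop :=
  ∀ i j i' j' : Fin n, (i : ℤ) - (j : ℤ) = (i' : ℤ) - (j' : ℤ) → M i j = M i' j'

/-- The `n×n` Hermitian Toeplitz matrix of Fourier coefficients of `f`:
its `(j,k)` entry is `c_{j-k}(f) = (1/2π) ∫_{-π}^{π} f(θ) e^{-i(j-k)θ} dθ`. -/
noncomputable def fourierToeplitz (n : ℕ) (f : ℝ → ℝ) : Matrix (Fin n) (Fin n) ℂ :=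
  Matrix.of fun j k =>
    (1 / (2 * (Real.pi : ℂ))) *
      ∫ θ in Icc (-Real.pi) Real.pi,
        (f θ : ℂ) * Complex.exp (-Complex.I * (((j : ℤ) - (k : ℤ) : ℤ) : ℂ) * (θ : ℂ))

/-- The Toeplitz-constrained covariance distance: the minimal combined diagonal
`q₀ + q̂₀` of positive semidefinite Hermitian Toeplitz perturbations `Q, Q̂`
with `M₁ + Q = M₂ + Q̂`. -/
noncomputable def deltaT (n : ℕ) (hn : 1 ≤ n) (M₁ M₂ : Matrix (Fin n) (Fin n) ℂ) : ℝ :=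
  sInf {x : ℝ | ∃ Q Qhat : Matrix (Fin n) (Fin n) ℂ,
    Q.PosSemidef ∧ IsToeplitz Q ∧ Qhat.PosSemidef ∧ IsToeplitz Qhat ∧
    M₁ + Q = M₂ + Qhat ∧
    x = (Q ⟨0, hn⟩ ⟨0, hn⟩ + Qhat ⟨0, hn⟩ ⟨0, hn⟩).re}

section Aux

variable {f : ℝ → ℝ}

lemma aux_integrable_mul_exp (hf : IntegrableOn f (Icc (-Real.pi) Real.pi)) (m : ℤ) :
    IntegrableOn (fun θ : ℝ => (f θ : ℂ) * Complex.exp (-Complex.I * (m : ℂ) * (θ : ℂ)))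
      (Icc (-Real.pi) Real.pi) := by
  have h1 : IntegrableOn (fun θ : ℝ => (f θ : ℂ)) (Icc (-Real.pi) Real.pi) := hf.ofReal
  have hc : Continuous (fun θ : ℝ => Complex.exp (-Complex.I * (m : ℂ) * (θ : ℂ))) := by
    fun_prop
  have h2 : AEStronglyMeasurable
      (fun θ : ℝ => Complex.exp (-Complex.I * (m : ℂ) * (θ : ℂ)))
      (volume.restrict (Icc (-Real.pi) Real.pi)) := hc.aestronglyMeasurable
  have h3 : ∀ θ : ℝ, ‖Complex.exp (-Complex.I * (m : ℂ) * (θ : ℂ))‖ = 1 := by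
    intro θ
    rw [Complex.norm_exp]
    have : (-Complex.I * (m : ℂ) * (θ : ℂ)).re = 0 := by
      simp [Complex.mul_re, Complex.mul_im]
    rw [this, Real.exp_zero]
  have h4 : Integrable
      (fun θ : ℝ => Complex.exp (-Complex.I * (m : ℂ) * (θ : ℂ)) * (f θ : ℂ))
      (volume.restrict (Icc (-Real.pi) Real.pi)) :=
    h1.bdd_mul (c := 1) h2 (Filter.Eventually.of_forall fun θ => le_of_eq (h3 θ))
  have he : (fun θ : ℝ => (f θ : ℂ) * Complex.exp (-Complex.I * (m : ℂ) * (θ : ℂ)))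
      = (fun θ : ℝ => Complex.exp (-Complex.I * (m : ℂ) * (θ : ℂ)) * (f θ : ℂ)) :=
    funext fun θ => mul_comm _ _
  rw [IntegrableOn, he]
  exact h4

lemma aux_toeplitz (n : ℕ) (f : ℝ → ℝ) : IsToeplitz (fourierToeplitz n f) := by
  intro i j i' j' h
  simp only [fourierToeplitz, Matrix.of_apply, h]

lemma aux_diag (n : ℕ) (f : ℝ → ℝ) (i : Fin n) :
    fourierToeplitz n f i i =
      (((1 / (2 * Real.pi)) * ∫ θ in Icc (-Real.pi) Real.pi, f θ : ℝ) : ℂ) := by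
  simp only [fourierToeplitz, Matrix.of_apply, sub_self, Int.cast_zero, mul_zero, zero_mul,
    Complex.exp_zero, mul_one]
  rw [show (∫ θ in Icc (-Real.pi) Real.pi, ((f θ : ℝ) : ℂ)) =
      ((∫ θ in Icc (-Real.pi) Real.pi, f θ : ℝ) : ℂ) from integral_ofReal]
  push_cast
  ring

lemma aux_add (n : ℕ) (f g : ℝ → ℝ)
    (hf : IntegrableOn f (Icc (-Real.pi) Real.pi))
    (hg : IntegrableOn g (Icc (-Real.pi) Real.pi)) :
    fourierToeplitz n (fun θ => f θ + g θ) = fourierToeplitz n f + fourierToeplitz n g := by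
  ext j k
  simp only [fourierToeplitz, Matrix.of_apply, Matrix.add_apply]
  rw [← mul_add, ← integral_add (aux_integrable_mul_exp hf _) (aux_integrable_mul_exp hg _)]
  congr 1
  refine setIntegral_congr_fun measurableSet_Icc fun θ _ => ?_
  push_cast
  ring

lemma aux_posSemidef (n : ℕ) (hf : IntegrableOn f (Icc (-Real.pi) Real.pi))
    (hf0 : ∀ θ ∈ Icc (-Real.pi) Real.pi, 0 ≤ f θ) :
    (fourierToeplitz n f).PosSemidef := by
  rw [Matrix.posSemidef_iff_dotProduct_mulVec]
  constructor
  · -- Hermitian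
    ext j k
    rw [Matrix.conjTranspose_apply]
    simp only [fourierToeplitz, Matrix.of_apply, RCLike.star_def, _root_.map_mul]
    have hc : (starRingEnd ℂ) (1 / (2 * (Real.pi : ℂ))) = 1 / (2 * (Real.pi : ℂ)) := by
      rw [show (1 / (2 * (Real.pi : ℂ))) = ((1 / (2 * Real.pi) : ℝ) : ℂ) by push_cast; ring,
        Complex.conj_ofReal]
    rw [hc, ← integral_conj]
    congr 1
    refine setIntegral_congr_fun measurableSet_Icc fun θ _ => ?_
    rw [_root_.map_mul, Complex.conj_ofReal, ← Complex.exp_conj]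
    congr 2
    simp only [_root_.map_mul, map_neg, Complex.conj_I, Complex.conj_ofReal, map_intCast]
    push_cast
    ring
  · intro x
    set I₀ : Set ℝ := Icc (-Real.pi) Real.pi with hI₀
    set S : ℝ → ℂ := fun θ => ∑ k : Fin n, x k * Complex.exp (Complex.I * ((k : ℤ) : ℂ) * θ)
      with hS
    have hconjS : ∀ θ : ℝ, (starRingEnd ℂ) (S θ) =
        ∑ j : Fin n, (starRingEnd ℂ) (x j) * Complex.exp (-Complex.I * ((j : ℤ) : ℂ) * θ) := by
      intro θ
      rw [hS, map_sum]
      refine Finset.sum_congr rfl fun j _ => ?_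
      rw [_root_.map_mul, ← Complex.exp_conj]
      congr 1
      simp only [_root_.map_mul, Complex.conj_I, map_intCast, Complex.conj_ofReal]
      try ring
    -- pointwise expansion of f θ * (conj S * S)
    have hpt : ∀ θ : ℝ, (f θ : ℂ) * ((starRingEnd ℂ) (S θ) * S θ) =
        ∑ j : Fin n, ∑ k : Fin n, (starRingEnd ℂ) (x j) * x k *
          ((f θ : ℂ) * Complex.exp (-Complex.I * (((j : ℤ) - (k : ℤ) : ℤ) : ℂ) * θ)) := by
      intro θ
      rw [hconjS, hS, Finset.sum_mul_sum, Finset.mul_sum]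
      refine Finset.sum_congr rfl fun j _ => ?_
      rw [Finset.mul_sum]
      refine Finset.sum_congr rfl fun k _ => ?_
      have hexp : Complex.exp (-Complex.I * (((j : ℤ) - (k : ℤ) : ℤ) : ℂ) * θ) =
          Complex.exp (-Complex.I * ((j : ℤ) : ℂ) * θ) *
          Complex.exp (Complex.I * ((k : ℤ) : ℂ) * θ) := by
        rw [← Complex.exp_add]
        congr 1
        push_cast
        ring
      rw [hexp]
      ring
    have hint : ∀ (j k : Fin n), IntegrableOn
        (fun θ : ℝ => (starRingEnd ℂ) (x j) * x k *
          ((f θ : ℂ) * Complex.exp (-Complex.I * (((j : ℤ) - (k : ℤ) : ℤ) : ℂ) * θ))) I₀ := by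
      intro j k
      exact (aux_integrable_mul_exp hf _).const_mul _
    have hmain : star x ⬝ᵥ (fourierToeplitz n f).mulVec x =
        (1 / (2 * (Real.pi : ℂ))) * ∫ θ in I₀, (f θ : ℂ) * ((starRingEnd ℂ) (S θ) * S θ) := by
      have hR : (∫ θ in I₀, (f θ : ℂ) * ((starRingEnd ℂ) (S θ) * S θ)) =
          ∑ j : Fin n, ∑ k : Fin n, (starRingEnd ℂ) (x j) * x k *
            ∫ θ in I₀, (f θ : ℂ) *
              Complex.exp (-Complex.I * (((j : ℤ) - (k : ℤ) : ℤ) : ℂ) * θ) := by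
        rw [setIntegral_congr_fun measurableSet_Icc (fun θ _ => hpt θ)]
        rw [integral_finset_sum _ (fun j _ => integrable_finset_sum _ (fun k _ => hint j k))]
        refine Finset.sum_congr rfl fun j _ => ?_
        rw [integral_finset_sum _ (fun k _ => hint j k)]
        refine Finset.sum_congr rfl fun k _ => ?_
        exact integral_const_mul _ _
      rw [hR, Finset.mul_sum]
      simp only [dotProduct, mulVec, fourierToeplitz, Matrix.of_apply, Pi.star_apply,
        RCLike.star_def, dotProduct]
      refine Finset.sum_congr rfl fun j _ => ?_
      rw [Finset.mul_sum, Finset.mul_sum]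
      refine Finset.sum_congr rfl fun k _ => ?_
      ring
    have hreal : ∀ θ : ℝ, (f θ : ℂ) * ((starRingEnd ℂ) (S θ) * S θ) =
        ((f θ * ‖S θ‖ ^ 2 : ℝ) : ℂ) := by
      intro θ
      rw [Complex.conj_mul']
      push_cast
      ring
    rw [hmain, setIntegral_congr_fun measurableSet_Icc (fun θ _ => hreal θ),
      show (∫ θ in I₀, ((f θ * ‖S θ‖ ^ 2 : ℝ) : ℂ)) =
        ((∫ θ in I₀, f θ * ‖S θ‖ ^ 2 : ℝ) : ℂ) from integral_ofReal]
    have hcoe : (1 / (2 * (Real.pi : ℂ))) * (((∫ θ in I₀, f θ * ‖S θ‖ ^ 2) : ℝ) : ℂ) =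
        (((1 / (2 * Real.pi)) * ∫ θ in I₀, f θ * ‖S θ‖ ^ 2 : ℝ) : ℂ) := by
      push_cast
      ring
    rw [hcoe]
    rw [Complex.zero_le_real]
    have hint0 : 0 ≤ ∫ θ in I₀, f θ * ‖S θ‖ ^ 2 := by
      refine setIntegral_nonneg measurableSet_Icc fun θ hθ => ?_
      exact mul_nonneg (hf0 θ hθ) (sq_nonneg _)
    have hπ : 0 ≤ 1 / (2 * Real.pi) := by positivity
    exact mul_nonneg hπ hint0

lemma aux_diag_re_nonneg {n : ℕ} {M : Matrix (Fin n) (Fin n) ℂ} (h : M.PosSemidef)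
    (i : Fin n) : 0 ≤ (M i i).re := by
  have h1 := h.dotProduct_mulVec_nonneg (Pi.single i 1)
  have h2 : star (Pi.single i 1 : Fin n → ℂ) ⬝ᵥ M.mulVec (Pi.single i 1) = M i i := by
    simp [dotProduct, mulVec, Pi.single_apply, apply_ite (star : ℂ → ℂ)]
  rw [h2] at h1
  simpa using (Complex.le_def.mp h1).1

end Aux

/-- Upper-bound half of Proposition 3: for every `n`, the Toeplitz covariance
distance between the Toeplitz matrices of Fourier coefficients of `f` and `f̂`
is at most the `L¹` distance `(1/2π)∫|f - f̂|`. -/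
theorem deltaT_fourierToeplitz_le_L1
    (f fhat : ℝ → ℝ)
    (hf : IntegrableOn f (Icc (-Real.pi) Real.pi))
    (hfhat : IntegrableOn fhat (Icc (-Real.pi) Real.pi))
    (hf0 : ∀ θ ∈ Icc (-Real.pi) Real.pi, 0 ≤ f θ)
    (hfhat0 : ∀ θ ∈ Icc (-Real.pi) Real.pi, 0 ≤ fhat θ)
    (n : ℕ) (hn : 1 ≤ n) :
    deltaT n hn (fourierToeplitz n f) (fourierToeplitz n fhat) ≤
      (1 / (2 * Real.pi)) * ∫ θ in Icc (-Real.pi) Real.pi, |f θ - fhat θ| := by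
  classical
  set g : ℝ → ℝ := fun θ => max (fhat θ - f θ) 0 with hg
  set ghat : ℝ → ℝ := fun θ => max (f θ - fhat θ) 0 with hghat
  have hgint : IntegrableOn g (Icc (-Real.pi) Real.pi) := (hfhat.sub hf).pos_part
  have hghint : IntegrableOn ghat (Icc (-Real.pi) Real.pi) := (hf.sub hfhat).pos_part
  have hg0 : ∀ θ ∈ Icc (-Real.pi) Real.pi, 0 ≤ g θ := fun θ _ => le_max_right _ _
  have hgh0 : ∀ θ ∈ Icc (-Real.pi) Real.pi, 0 ≤ ghat θ := fun θ _ => le_max_right _ _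
  set Q := fourierToeplitz n g with hQ
  set Qhat := fourierToeplitz n ghat with hQhat
  have hQps : Q.PosSemidef := aux_posSemidef n hgint hg0
  have hQhps : Qhat.PosSemidef := aux_posSemidef n hghint hgh0
  have hfg : (fun θ => f θ + g θ) = (fun θ => fhat θ + ghat θ) := by
    funext θ
    simp only [hg, hghat]
    rcases le_total (f θ) (fhat θ) with h | h
    · rw [max_eq_left (by linarith), max_eq_right (by linarith)]; ring
    · rw [max_eq_right (by linarith), max_eq_left (by linarith)]; ring
  have hsum : fourierToeplitz n f + Q = fourierToeplitz n fhat + Qhat := by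
    rw [hQ, hQhat, ← aux_add n f g hf hgint, ← aux_add n fhat ghat hfhat hghint, hfg]
  have habs : ∀ θ : ℝ, |f θ - fhat θ| = g θ + ghat θ := by
    intro θ
    simp only [hg, hghat]
    rcases le_total (f θ) (fhat θ) with h | h
    · rw [abs_of_nonpos (by linarith), max_eq_left (by linarith),
        max_eq_right (by linarith)]; ring
    · rw [abs_of_nonneg (by linarith), max_eq_right (by linarith),
        max_eq_left (by linarith)]; ring
  have hval : (Q ⟨0, hn⟩ ⟨0, hn⟩ + Qhat ⟨0, hn⟩ ⟨0, hn⟩).re =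
      (1 / (2 * Real.pi)) * ∫ θ in Icc (-Real.pi) Real.pi, |f θ - fhat θ| := by
    rw [hQ, hQhat, aux_diag, aux_diag]
    rw [setIntegral_congr_fun measurableSet_Icc (fun θ _ => habs θ)]
    rw [integral_add hgint hghint]
    push_cast
    simp [Complex.add_re]
    ring
  have hmem : (1 / (2 * Real.pi)) * (∫ θ in Icc (-Real.pi) Real.pi, |f θ - fhat θ|) ∈
      {x : ℝ | ∃ Q' Qhat' : Matrix (Fin n) (Fin n) ℂ,
        Q'.PosSemidef ∧ IsToeplitz Q' ∧ Qhat'.PosSemidef ∧ IsToeplitz Qhat' ∧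
        fourierToeplitz n f + Q' = fourierToeplitz n fhat + Qhat' ∧
        x = (Q' ⟨0, hn⟩ ⟨0, hn⟩ + Qhat' ⟨0, hn⟩ ⟨0, hn⟩).re} := by
    exact ⟨Q, Qhat, hQps, aux_toeplitz n g, hQhps, aux_toeplitz n ghat, hsum, hval.symm⟩
  have hbdd : BddBelow {x : ℝ | ∃ Q' Qhat' : Matrix (Fin n) (Fin n) ℂ,
      Q'.PosSemidef ∧ IsToeplitz Q' ∧ Qhat'.PosSemidef ∧ IsToeplitz Qhat' ∧
      fourierToeplitz n f + Q' = fourierToeplitz n fhat + Qhat' ∧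
      x = (Q' ⟨0, hn⟩ ⟨0, hn⟩ + Qhat' ⟨0, hn⟩ ⟨0, hn⟩).re} := by
    refine ⟨0, fun x hx => ?_⟩
    obtain ⟨Q', Qhat', hQ'ps, -, hQh'ps, -, -, hx⟩ := hx
    rw [hx, Complex.add_re]
    exact add_nonneg (aux_diag_re_nonneg hQ'ps _) (aux_diag_re_nonneg hQh'ps _)
  exact csInf_le hbdd hmem
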